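/- arXiv:1706.02432 — 5 statements merged into one kernel-verified Lean document; each statement's English description precedes it below -/
import Mathlib

section
/- For every integer n ≥ 2 and every constant μ ∈ (0,1), there exist constants A > 0, B ≥ 0, α ∈ [n, ∞) and β ∈ (0,1) such that the function h(θ) = A (sin(θ/μ))^{1/(1+α)} + B (sin(θ/μ))^{1/(1+β)} satisfies 𝓛h(θ) ≤ 0 for all θ ∈ (0, μπ). -/
open Real

/-!
Write `s = sin (θ / μ)`, `c = cos (θ / μ)`, `a = A s^p`, `b = B s^q` with `p = 1/(1+α)`,
`q = 1/(1+β)`. Multiplying `𝓛h` by `(μ s)²` gives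
`(a+b)(1+(a+b)²)(a ψ_p + b ψ_q) + n μ² s² (1+(a+b)²) + n c² (p a + q b)²`,
where `ψ_r = (μ s)² (f'' + f) / f = r (r c² - 1) + μ² s² = -r(1-r) + (μ² - r²) s²` for
`f θ = sin (θ / μ) ^ r`.
For `q ≥ μ` we have `ψ_q ≤ -q(1-q)`, and the choice `q(1-q) B = A` lets the `b`-term absorb the
positive part `a s²` of `a ψ_p`, so the first summand is at most `-p(1-p) a (a+b)(1+(a+b)²)`.
Since `s ≤ s^p` and `s^q ≤ s^{2p}`, this dominates the two positive summands once `4np ≤ 1-p` and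
`A` is large.
-/

noncomputable def opL (n : ℝ) (h : ℝ → ℝ) (θ : ℝ) : ℝ :=
  h θ * (1 + h θ ^ 2) * (deriv (deriv h) θ + h θ) + n * (1 + h θ ^ 2 + deriv h θ ^ 2)

theorem hasDerivAt_rpow_sin_div {μ r x : ℝ} (hx : sin (x / μ) ≠ 0) :
    HasDerivAt (fun t => sin (t / μ) ^ r)
      (r * cos (x / μ) * sin (x / μ) ^ r / (μ * sin (x / μ))) x := by
  have hu : HasDerivAt (fun t => t / μ) (1 / μ) x := (hasDerivAt_id' (x := x)).div_const μ
  refine (hu.sin.rpow_const (Or.inl hx)).congr_deriv ?_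
  rw [rpow_sub_one hx]
  field_simp

theorem hasDerivAt_deriv_rpow_sin_div {μ r x : ℝ} (hμ : μ ≠ 0) (hx : sin (x / μ) ≠ 0) :
    HasDerivAt (fun t => r * cos (t / μ) * sin (t / μ) ^ r / (μ * sin (t / μ)))
      (r * (r * cos (x / μ) ^ 2 - 1) * sin (x / μ) ^ r / (μ * sin (x / μ)) ^ 2) x := by
  have hu : HasDerivAt (fun t => t / μ) (1 / μ) x := (hasDerivAt_id' (x := x)).div_const μ
  refine (((hu.cos.const_mul r).mul (hasDerivAt_rpow_sin_div hx)).div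
    (hu.sin.const_mul μ) (mul_ne_zero hμ hx)).congr_deriv ?_
  simp only [Pi.mul_apply]
  field_simp
  linear_combination (-r * sin (x / μ) ^ r) * sin_sq_add_cos_sq (x / μ)

section SumOfPowers

variable {μ A B p q x : ℝ}

theorem deriv_sum_rpow_sin_div (hx : sin (x / μ) ≠ 0) :
    deriv (fun t => A * sin (t / μ) ^ p + B * sin (t / μ) ^ q) x =
      A * (p * cos (x / μ) * sin (x / μ) ^ p / (μ * sin (x / μ)))
        + B * (q * cos (x / μ) * sin (x / μ) ^ q / (μ * sin (x / μ))) :=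
  (((hasDerivAt_rpow_sin_div hx).const_mul A).add
    ((hasDerivAt_rpow_sin_div hx).const_mul B)).deriv

theorem deriv_deriv_sum_rpow_sin_div (hμ : μ ≠ 0) (hx : sin (x / μ) ≠ 0) :
    deriv (deriv fun t => A * sin (t / μ) ^ p + B * sin (t / μ) ^ q) x =
      A * (p * (p * cos (x / μ) ^ 2 - 1) * sin (x / μ) ^ p / (μ * sin (x / μ)) ^ 2)
        + B * (q * (q * cos (x / μ) ^ 2 - 1) * sin (x / μ) ^ q / (μ * sin (x / μ)) ^ 2) := by
  have hne : ∀ᶠ t in nhds x, sin (t / μ) ≠ 0 :=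
    (continuous_sin.comp (continuous_id.div_const μ)).continuousAt.eventually_ne hx
  rw [Filter.EventuallyEq.deriv_eq (hne.mono fun t ht =>
    deriv_sum_rpow_sin_div (A := A) (B := B) (p := p) (q := q) ht)]
  exact (((hasDerivAt_deriv_rpow_sin_div hμ hx).const_mul A).add
    ((hasDerivAt_deriv_rpow_sin_div hμ hx).const_mul B)).deriv

end SumOfPowers

theorem numerator_nonpos_of_bounds {a b g N X σ Y : ℝ} (ha : 0 ≤ a) (hb : 0 ≤ b) (hg : 0 ≤ g)
    (hX : X ≤ -(g * a)) (hσ : N * σ ≤ g / 2 * a ^ 2)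
    (hY : N * Y ≤ g / 2 * a ^ 2 + g / 2 * a ^ 4) :
    (a + b) * (1 + (a + b) ^ 2) * X + N * σ * (1 + (a + b) ^ 2) + N * Y ≤ 0 := by
  set h := a + b
  have hah : a ≤ h := le_add_of_nonneg_right hb
  have hga : 0 ≤ g * a := mul_nonneg hg ha
  have hXh : h * (1 + h ^ 2) * X ≤ -(g * a * h) - g * a * h ^ 3 := by
    nlinarith [mul_le_mul_of_nonneg_left hX (by positivity : 0 ≤ h * (1 + h ^ 2))]
  have hσh : N * σ * (1 + h ^ 2) ≤ g / 2 * a ^ 2 * (1 + h ^ 2) :=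
    mul_le_mul_of_nonneg_right hσ (by positivity)
  have h2 : g * a ^ 2 ≤ g * a * h := by nlinarith [mul_le_mul_of_nonneg_left hah hga]
  have h4 : g * a ^ 2 * h ^ 2 ≤ g * a * h ^ 3 := by
    nlinarith [mul_le_mul_of_nonneg_left hah (mul_nonneg hga (sq_nonneg h))]
  have h4' : g * a ^ 4 ≤ g * a * h ^ 3 := by
    nlinarith [mul_le_mul_of_nonneg_left (pow_le_pow_left₀ ha hah 3) hga]
  linarith

theorem psi_combination_le {a b c s μ p q : ℝ} (ha : 0 ≤ a) (hb : 0 ≤ b)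
    (hcs : c ^ 2 + s ^ 2 = 1) (hμ : 0 ≤ μ) (hμq : μ ≤ q) (hq : q ≤ 1)
    (has : a * s ^ 2 ≤ q * (1 - q) * b) :
    a * (p * (p * c ^ 2 - 1) + μ ^ 2 * s ^ 2) + b * (q * (q * c ^ 2 - 1) + μ ^ 2 * s ^ 2)
      ≤ -(p * (1 - p) * a) := by
  have hc : c ^ 2 = 1 - s ^ 2 := by linarith
  have hμ2 : μ ^ 2 ≤ q ^ 2 := pow_le_pow_left₀ hμ hμq 2
  have hq2 : q ^ 2 ≤ 1 := pow_le_one₀ (hμ.trans hμq) hq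
  have hψp : p * (p * c ^ 2 - 1) + μ ^ 2 * s ^ 2 ≤ -(p * (1 - p)) + s ^ 2 := by
    rw [hc]
    nlinarith [mul_le_mul_of_nonneg_right (hμ2.trans hq2) (sq_nonneg s),
      mul_nonneg (sq_nonneg p) (sq_nonneg s)]
  have hψq : q * (q * c ^ 2 - 1) + μ ^ 2 * s ^ 2 ≤ -(q * (1 - q)) := by
    rw [hc]
    nlinarith [mul_le_mul_of_nonneg_right hμ2 (sq_nonneg s)]
  nlinarith [mul_le_mul_of_nonneg_left hψp ha, mul_le_mul_of_nonneg_left hψq hb]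

theorem mul_sq_mul_add_mul_le {N c p q a b g : ℝ} (hN : 0 ≤ N) (hc : c ^ 2 ≤ 1)
    (hp : 4 * N * p ^ 2 ≤ g) (hb : 4 * N * q ^ 2 * b ^ 2 ≤ g * a ^ 4) :
    N * (c ^ 2 * (p * a + q * b) ^ 2) ≤ g / 2 * a ^ 2 + g / 2 * a ^ 4 := by
  have hsq : (p * a + q * b) ^ 2 ≤ 2 * (p ^ 2 * a ^ 2) + 2 * (q ^ 2 * b ^ 2) := by
    nlinarith [sq_nonneg (p * a - q * b)]
  calc N * (c ^ 2 * (p * a + q * b) ^ 2) ≤ N * (p * a + q * b) ^ 2 := by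
        gcongr; exact mul_le_of_le_one_left (sq_nonneg _) hc
    _ ≤ N * (2 * (p ^ 2 * a ^ 2) + 2 * (q ^ 2 * b ^ 2)) := by gcongr
    _ ≤ g / 2 * a ^ 2 + g / 2 * a ^ 4 := by
        nlinarith [mul_le_mul_of_nonneg_right hp (sq_nonneg a)]

theorem opL_numerator_nonpos {N μ p q A B s c P Q : ℝ} (hN : 0 ≤ N) (hμ : 0 < μ)
    (hμq : μ ≤ q) (hq : q < 1) (hp : 0 ≤ p) (hNp : 4 * N * p ≤ 1 - p) (hA : 0 ≤ A)
    (hB : q * (1 - q) * B = A) (hA2 : 2 * N ≤ p * (1 - p) * A ^ 2)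
    (hAB : 4 * N * B ^ 2 ≤ p * (1 - p) * A ^ 4) (hs : 0 < s) (hcs : c ^ 2 + s ^ 2 = 1)
    (hsP : s ≤ P) (hP1 : P ≤ 1) (hsQ : s ≤ Q) (hQP : Q ≤ P ^ 2) :
    (A * P + B * Q) * (1 + (A * P + B * Q) ^ 2) *
        (A * P * (p * (p * c ^ 2 - 1) + μ ^ 2 * s ^ 2)
          + B * Q * (q * (q * c ^ 2 - 1) + μ ^ 2 * s ^ 2))
      + N * (μ ^ 2 * s ^ 2) * (1 + (A * P + B * Q) ^ 2)
      + N * (c ^ 2 * (p * (A * P) + q * (B * Q)) ^ 2) ≤ 0 := by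
  have hq0 : 0 < q := hμ.trans_le hμq
  have hB0 : 0 ≤ B := (mul_nonneg_iff_of_pos_left (mul_pos hq0 (by linarith))).1 (hB ▸ hA)
  have ha : 0 ≤ A * P := mul_nonneg hA (hs.le.trans hsP)
  have hb : 0 ≤ B * Q := mul_nonneg hB0 (hs.le.trans hsQ)
  have hg : 0 ≤ p * (1 - p) := by nlinarith
  have has : A * P * s ^ 2 ≤ q * (1 - q) * (B * Q) := by
    rw [← mul_assoc, hB]
    have hs2 : s ^ 2 ≤ s := by nlinarith
    have : P * s ^ 2 ≤ Q := by nlinarith [mul_le_mul_of_nonneg_right hP1 (sq_nonneg s)]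
    simpa only [mul_assoc] using mul_le_mul_of_nonneg_left this hA
  have hX := psi_combination_le (p := p) ha hb hcs hμ.le hμq hq.le has
  have hσ : N * (μ ^ 2 * s ^ 2) ≤ p * (1 - p) / 2 * (A * P) ^ 2 := by
    have hμ1 : μ ^ 2 ≤ 1 := pow_le_one₀ hμ.le (by linarith)
    have hsP2 : s ^ 2 ≤ P ^ 2 := pow_le_pow_left₀ hs.le hsP 2
    calc N * (μ ^ 2 * s ^ 2) ≤ N * P ^ 2 := by
          gcongr; nlinarith [mul_le_mul_of_nonneg_right hμ1 (sq_nonneg s)]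
      _ ≤ p * (1 - p) / 2 * A ^ 2 * P ^ 2 := by gcongr; linarith
      _ = p * (1 - p) / 2 * (A * P) ^ 2 := by ring
  have hbq : 4 * N * q ^ 2 * (B * Q) ^ 2 ≤ p * (1 - p) * (A * P) ^ 4 := by
    have hq1 : q ^ 2 ≤ 1 := pow_le_one₀ hq0.le hq.le
    have hQ2 : Q ^ 2 ≤ P ^ 4 := by
      simpa only [← pow_mul] using pow_le_pow_left₀ (hs.le.trans hsQ) hQP 2
    calc 4 * N * q ^ 2 * (B * Q) ^ 2 ≤ 4 * N * B ^ 2 * Q ^ 2 := by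
          nlinarith [mul_le_mul_of_nonneg_right hq1 (by positivity : 0 ≤ 4 * N * B ^ 2 * Q ^ 2)]
      _ ≤ p * (1 - p) * A ^ 4 * P ^ 4 := by gcongr
      _ = p * (1 - p) * (A * P) ^ 4 := by ring
  have hc1 : c ^ 2 ≤ 1 := by nlinarith [sq_nonneg s]
  have hNp2 : 4 * N * p ^ 2 ≤ p * (1 - p) := by nlinarith [mul_le_mul_of_nonneg_left hNp hp]
  exact numerator_nonpos_of_bounds ha hb hg hX hσ (mul_sq_mul_add_mul_le hN hc1 hNp2 hbq)

theorem opL_sum_rpow_sin_div_nonpos {N μ p q A B θ : ℝ} (hN : 0 ≤ N) (hμ : 0 < μ)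
    (hμq : μ ≤ q) (hq : q < 1) (hp : 0 ≤ p) (hpq : 2 * p ≤ q) (hNp : 4 * N * p ≤ 1 - p)
    (hA : 0 ≤ A) (hB : q * (1 - q) * B = A) (hA2 : 2 * N ≤ p * (1 - p) * A ^ 2)
    (hAB : 4 * N * B ^ 2 ≤ p * (1 - p) * A ^ 4) (hθ : 0 < sin (θ / μ)) :
    opL N (fun t => A * sin (t / μ) ^ p + B * sin (t / μ) ^ q) θ ≤ 0 := by
  rw [opL, deriv_deriv_sum_rpow_sin_div hμ.ne' hθ.ne', deriv_sum_rpow_sin_div hθ.ne']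
  set s := sin (θ / μ)
  set c := cos (θ / μ)
  have hcs : c ^ 2 + s ^ 2 = 1 := by rw [add_comm]; exact sin_sq_add_cos_sq _
  have hs1 : s ≤ 1 := sin_le_one _
  set P := s ^ p
  set Q := s ^ q
  have hP1 : P ≤ 1 := rpow_le_one hθ.le hs1 hp
  have hsP : s ≤ P := by simpa using rpow_le_rpow_of_exponent_ge hθ hs1 (by linarith : p ≤ 1)
  have hsQ : s ≤ Q := by simpa using rpow_le_rpow_of_exponent_ge hθ hs1 hq.le
  have hQP : Q ≤ P ^ 2 := by
    rw [← rpow_natCast, ← rpow_mul hθ.le]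
    exact rpow_le_rpow_of_exponent_ge hθ hs1 (by push_cast; linarith)
  have hμs : 0 < (μ * s) ^ 2 := by positivity
  clear_value s c P Q
  calc _ = ((A * P + B * Q) * (1 + (A * P + B * Q) ^ 2) *
          (A * P * (p * (p * c ^ 2 - 1) + μ ^ 2 * s ^ 2)
            + B * Q * (q * (q * c ^ 2 - 1) + μ ^ 2 * s ^ 2))
        + N * (μ ^ 2 * s ^ 2) * (1 + (A * P + B * Q) ^ 2)
        + N * (c ^ 2 * (p * (A * P) + q * (B * Q)) ^ 2)) / (μ * s) ^ 2 := by
        field_simp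
        ring
    _ ≤ 0 := div_nonpos_of_nonpos_of_nonneg (opL_numerator_nonpos hN hμ hμq hq hp hNp hA hB
        hA2 hAB hθ hcs hsP hP1 hsQ hQP) hμs.le

theorem sin_div_pos_of_mem_Ioo {μ θ : ℝ} (hμ : 0 < μ) (hθ : θ ∈ Set.Ioo 0 (μ * π)) :
    0 < sin (θ / μ) :=
  sin_pos_of_pos_of_lt_pi (div_pos hθ.1 hμ) ((div_lt_iff₀ hμ).2 (by linarith [hθ.2]))

theorem exists_amplitude {N g e : ℝ} (hN : 0 < N) (hg : 0 < g) (he : 0 < e) (he1 : e ≤ 1) :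
    ∃ A : ℝ, 0 < A ∧ 2 * N ≤ g * A ^ 2 ∧ 4 * N * (A / e) ^ 2 ≤ g * A ^ 4 := by
  set A := √(4 * N / (g * e ^ 2))
  have hA2 : A ^ 2 = 4 * N / (g * e ^ 2) := sq_sqrt (by positivity)
  refine ⟨A, sqrt_pos.2 (by positivity), ?_, le_of_eq ?_⟩
  · rw [hA2, mul_div_assoc', le_div_iff₀ (by positivity)]
    nlinarith [mul_le_mul_of_nonneg_left (pow_le_one₀ (n := 2) he.le he1) (mul_pos hg hN).le]
  · rw [div_pow, show A ^ 4 = (A ^ 2) ^ 2 by ring, hA2]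
    field_simp

/-- Lemma 2.1. For every `n ≥ 2` and `μ ∈ (0,1)` there are constants
`A > 0`, `B ≥ 0`, `α ∈ [n, ∞)`, `β ∈ (0,1)` such that
`h(θ) = A (sin(θ/μ))^{1/(1+α)} + B (sin(θ/μ))^{1/(1+β)}` satisfies
`𝓛h = h(1+h²)(h''+h) + n(1+h²+(h')²) ≤ 0` on `(0, μπ)`. -/
theorem stmt2 (n : ℕ) (hn : 2 ≤ n) (μ : ℝ) (hμ : μ ∈ Set.Ioo (0:ℝ) 1) :
    ∃ A B α β : ℝ, 0 < A ∧ 0 ≤ B ∧ (n : ℝ) ≤ α ∧ β ∈ Set.Ioo (0:ℝ) 1 ∧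
      ∀ h : ℝ → ℝ,
        (h = fun θ => A * Real.sin (θ / μ) ^ (1 / (1 + α))
            + B * Real.sin (θ / μ) ^ (1 / (1 + β))) →
        ∀ θ ∈ Set.Ioo 0 (μ * Real.pi),
          h θ * (1 + h θ ^ 2) * (deriv (deriv h) θ + h θ)
            + (n : ℝ) * (1 + h θ ^ 2 + (deriv h θ) ^ 2) ≤ 0 := by
  obtain ⟨hμ0, hμ1⟩ := hμ
  have hn2 : (2 : ℝ) ≤ n := by exact_mod_cast hn
  set p : ℝ := 1 / (1 + 4 * n) with hp_def
  set q : ℝ := (1 + μ) / 2 with hq_def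
  have hp : 0 < p := by positivity
  have hNp : 4 * n * p = 1 - p := by rw [hp_def]; field_simp; ring
  have h2p : 2 * p ≤ q := by
    have : p ≤ 1 / 9 := by rw [hp_def, div_le_div_iff₀ (by positivity) (by norm_num)]; linarith
    linarith
  have hμq : μ < q := by rw [hq_def]; linarith
  have hq1 : q < 1 := by rw [hq_def]; linarith
  have he : 0 < q * (1 - q) := mul_pos (by linarith) (by linarith)
  have hq : 1 / (1 + (1 - μ) / (1 + μ)) = q := by rw [hq_def]; field_simp; ring
  obtain ⟨A, hA, hA2, hAB⟩ := exists_amplitude (N := n) (g := p * (1 - p)) (e := q * (1 - q))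
    (by positivity) (mul_pos hp (by linarith)) he (by nlinarith)
  refine ⟨A, A / (q * (1 - q)), 4 * n, (1 - μ) / (1 + μ), hA, by positivity, by linarith,
    ⟨by apply div_pos <;> linarith, by rw [div_lt_one (by linarith)]; linarith⟩, ?_⟩
  rintro h rfl θ hθ
  rw [hq]
  exact opL_sum_rpow_sin_div_nonpos (by positivity) hμ0 hμq.le hq1 hp.le h2p hNp.le hA.le
    (mul_div_cancel₀ _ he.ne') hA2 hAB (sin_div_pos_of_mem_Ioo hμ0 hθ)
end

section
/- Let n ≥ 2 be an integer and μ ∈ (0, 1/(1+n)]. Then the function h(θ) = √((1+n)μ) · (sin(θ/μ))^{1/(1+n)} satisfies 𝓛h(θ) ≤ n − n (sin(θ/μ))^{(2−2n)/(1+n)} ≤ 0 for all θ ∈ (0, μπ). -/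
/-!
With `p = 1/(1+n)`, `c² = (1+n)μ`, `s = sin(θ/μ)` and `u = s^p`, differentiating `h = c u` twice
and eliminating `cos²(θ/μ) = 1 - s²` collapses the operator to
`𝓛h = n - n u⁴/s² + u² ((1+n)²μ² - 1)(1/μ + u²)`, where `u⁴/s² = s^{(2-2n)/(1+n)}`.
The last term is `≤ 0` because `(1+n)μ ≤ 1`, and `s ≤ 1` with a nonpositive exponent gives the
second inequality.
-/

open Real Filter Topology

section SinePower

variable {c μ p θ : ℝ}

theorem hasDerivAt_const_mul_sin_div_rpow (hs : sin (θ / μ) ≠ 0) :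
    HasDerivAt (fun t => c * sin (t / μ) ^ p)
      (c * p / μ * sin (θ / μ) ^ (p - 1) * cos (θ / μ)) θ := by
  refine ((((hasDerivAt_id' θ).div_const μ).sin.rpow_const (p := p) (Or.inl hs)).const_mul c
    ).congr_deriv ?_
  ring

theorem deriv_const_mul_sin_div_rpow_eventuallyEq (hs : sin (θ / μ) ≠ 0) :
    deriv (fun t => c * sin (t / μ) ^ p)
      =ᶠ[𝓝 θ] fun t => c * p / μ * sin (t / μ) ^ (p - 1) * cos (t / μ) := by
  have hcont : ContinuousAt (fun t => sin (t / μ)) θ := by fun_prop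
  filter_upwards [hcont.eventually_ne hs] with t ht
  exact (hasDerivAt_const_mul_sin_div_rpow ht).deriv

theorem deriv_const_mul_sin_div_rpow (hs : sin (θ / μ) ≠ 0) :
    deriv (fun t => c * sin (t / μ) ^ p) θ
      = c * p / μ * (sin (θ / μ) ^ p / sin (θ / μ)) * cos (θ / μ) := by
  rw [(hasDerivAt_const_mul_sin_div_rpow hs).deriv, rpow_sub_one hs]

theorem deriv_deriv_const_mul_sin_div_rpow (hs : sin (θ / μ) ≠ 0) :
    deriv (deriv fun t => c * sin (t / μ) ^ p) θ
      = c * p / μ ^ 2 *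
          ((p - 1) * (sin (θ / μ) ^ p / sin (θ / μ) ^ 2) * cos (θ / μ) ^ 2 - sin (θ / μ) ^ p) := by
  rw [(deriv_const_mul_sin_div_rpow_eventuallyEq hs).deriv_eq]
  have hpow := hasDerivAt_const_mul_sin_div_rpow (c := c * p / μ) (p := p - 1) hs
  have hcos : HasDerivAt (fun t => cos (t / μ)) (-sin (θ / μ) * (1 / μ)) θ := by
    simpa using ((hasDerivAt_id' θ).div_const μ).cos
  refine (hpow.mul hcos).deriv.trans ?_
  rw [rpow_sub_one hs, rpow_sub_one hs]
  field_simp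
  ring

end SinePower

theorem natCast_sub_mul_rpow_nonpos (n : ℕ) {s : ℝ} (hs0 : 0 < s) (hs1 : s ≤ 1) :
    (n : ℝ) - n * s ^ ((2 - 2 * (n : ℝ)) / (1 + n)) ≤ 0 := by
  rcases n.eq_zero_or_pos with rfl | hn
  · simp
  have hn1 : (1 : ℝ) ≤ n := by exact_mod_cast hn
  have hexp : (2 - 2 * (n : ℝ)) / (1 + n) ≤ 0 :=
    div_nonpos_of_nonpos_of_nonneg (by linarith) (by positivity)
  nlinarith [one_le_rpow_of_pos_of_le_one_of_nonpos hs0 hs1 hexp]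

theorem rpow_two_sub_two_mul_div_one_add {n s : ℝ} (hn : 1 + n ≠ 0) (hs : 0 < s) :
    s ^ ((2 - 2 * n) / (1 + n)) = (s ^ (1 / (1 + n))) ^ 4 / s ^ 2 := by
  rw [← rpow_natCast, ← rpow_natCast, ← rpow_mul hs.le, ← rpow_sub hs]
  congr 1
  field_simp
  push_cast
  ring

theorem operator_expr_eq_of_sq_eq {n μ c s co u : ℝ} (hn : 0 ≤ n) (hμ : μ ≠ 0) (hs : s ≠ 0)
    (hc : c ^ 2 = (1 + n) * μ) (hco : co ^ 2 = 1 - s ^ 2) :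
    c * u * (1 + (c * u) ^ 2) *
        (c * (1 / (1 + n)) / μ ^ 2 * ((1 / (1 + n) - 1) * (u / s ^ 2) * co ^ 2 - u) + c * u)
      + n * (1 + (c * u) ^ 2 + (c * (1 / (1 + n)) / μ * (u / s) * co) ^ 2)
      = n - n * (u ^ 4 / s ^ 2) + u ^ 2 * ((1 + n) ^ 2 * μ ^ 2 - 1) * (1 / μ + u ^ 2) := by
  have hk : 1 + n ≠ 0 := by positivity
  have hc' : c ^ 4 = ((1 + n) * μ) ^ 2 := by rw [← hc]; ring
  field_simp
  ring_nf
  rw [hc, hc', hco]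
  ring

theorem sq_mul_sub_one_mul_add_sq_nonpos {n μ : ℝ} (u : ℝ) (hn : 0 ≤ n) (hμ : 0 < μ)
    (hnμ : (1 + n) * μ ≤ 1) :
    u ^ 2 * ((1 + n) ^ 2 * μ ^ 2 - 1) * (1 / μ + u ^ 2) ≤ 0 := by
  have hsq : (1 + n) ^ 2 * μ ^ 2 - 1 ≤ 0 := by
    nlinarith [mul_pos (by positivity : (0 : ℝ) < 1 + n) hμ]
  exact mul_nonpos_of_nonpos_of_nonneg
    (mul_nonpos_of_nonneg_of_nonpos (sq_nonneg u) hsq) (by positivity)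

theorem stmt3_general (n : ℕ) (μ : ℝ) (hμ0 : 0 < μ) (hμ1 : μ ≤ 1 / (1 + (n : ℝ))) :
    ∀ h : ℝ → ℝ,
      (h = fun θ =>
        Real.sqrt ((1 + (n : ℝ)) * μ) * Real.sin (θ / μ) ^ (1 / (1 + (n : ℝ)))) →
      ∀ θ ∈ Set.Ioo 0 (μ * Real.pi),
        h θ * (1 + h θ ^ 2) * (deriv (deriv h) θ + h θ)
            + (n : ℝ) * (1 + h θ ^ 2 + (deriv h θ) ^ 2)
          ≤ (n : ℝ) - (n : ℝ) * Real.sin (θ / μ) ^ ((2 - 2 * (n : ℝ)) / (1 + (n : ℝ))) ∧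
        (n : ℝ) - (n : ℝ) * Real.sin (θ / μ) ^ ((2 - 2 * (n : ℝ)) / (1 + (n : ℝ))) ≤ 0 := by
  rintro h rfl θ ⟨hθ0, hθπ⟩
  have hs : 0 < sin (θ / μ) :=
    sin_pos_of_pos_of_lt_pi (div_pos hθ0 hμ0) ((div_lt_iff₀ hμ0).2 (by linarith))
  have hnμ : (1 + (n : ℝ)) * μ ≤ 1 := by rwa [le_div_iff₀' (by positivity)] at hμ1
  refine ⟨?_, natCast_sub_mul_rpow_nonpos n hs (sin_le_one _)⟩
  beta_reduce
  rw [deriv_deriv_const_mul_sin_div_rpow hs.ne', deriv_const_mul_sin_div_rpow hs.ne',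
    operator_expr_eq_of_sq_eq n.cast_nonneg hμ0.ne' hs.ne' (sq_sqrt (by positivity)) (cos_sq' _),
    rpow_two_sub_two_mul_div_one_add (by positivity) hs]
  linarith [sq_mul_sub_one_mul_add_sq_nonpos (sin (θ / μ) ^ (1 / (1 + (n : ℝ))))
    n.cast_nonneg hμ0 hnμ]

/-- For `n ≥ 2` and `μ ∈ (0, 1/(1+n)]`, the function
`h(θ) = √((1+n)μ) (sin(θ/μ))^{1/(1+n)}` satisfies
`𝓛h(θ) ≤ n − n (sin(θ/μ))^{(2−2n)/(1+n)} ≤ 0` on `(0, μπ)`, where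
`𝓛h = h(1+h²)(h''+h) + n(1+h²+(h')²)`. -/
theorem stmt3 (n : ℕ) (hn : 2 ≤ n) (μ : ℝ) (hμ0 : 0 < μ) (hμ1 : μ ≤ 1 / (1 + (n : ℝ))) :
    ∀ h : ℝ → ℝ,
      (h = fun θ =>
        Real.sqrt ((1 + (n : ℝ)) * μ) * Real.sin (θ / μ) ^ (1 / (1 + (n : ℝ)))) →
      ∀ θ ∈ Set.Ioo 0 (μ * Real.pi),
        h θ * (1 + h θ ^ 2) * (deriv (deriv h) θ + h θ)
            + (n : ℝ) * (1 + h θ ^ 2 + (deriv h θ) ^ 2)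
          ≤ (n : ℝ) - (n : ℝ) * Real.sin (θ / μ) ^ ((2 - 2 * (n : ℝ)) / (1 + (n : ℝ))) ∧
        (n : ℝ) - (n : ℝ) * Real.sin (θ / μ) ^ ((2 - 2 * (n : ℝ)) / (1 + (n : ℝ))) ≤ 0 :=
  stmt3_general n μ hμ0 hμ1
end

section
/- For every integer n ≥ 2 there exists ε₀ > 0, depending only on n, with the following property. Let p ∈ ℝⁿ, let f be twice differentiable at p with negative semidefinite Hessian D²f(p) ≤ 0, let w be differentiable at p with |∇w(p)| ≤ ε₀, and set h = f − w. Then Σ_{i,j=1}^n a_{ij}(∇h(p)) ∂_{ij}f(p) ≥ (1 + (2.1 + 1.2(n−1)) |∇w(p)|) · Σ_{i,j=1}^n a_{ij}(∇f(p)) ∂_{ij}f(p). -/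
open scoped BigOperators RealInnerProductSpace
open Metric Filter Topology

noncomputable section

/-- The partial derivative `∂_i f` at `x`. -/
def pd (n : ℕ) (f : EuclideanSpace ℝ (Fin n) → ℝ) (i : Fin n)
    (x : EuclideanSpace ℝ (Fin n)) : ℝ :=
  fderiv ℝ f x (EuclideanSpace.single i 1)

/-- The second partial derivative `∂_{ij} f` at `x`. -/
def pd2 (n : ℕ) (f : EuclideanSpace ℝ (Fin n) → ℝ) (i j : Fin n)
    (x : EuclideanSpace ℝ (Fin n)) : ℝ :=
  pd n (pd n f i) j x

/-- The gradient vector `∇f(x)`. -/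
def gradAt (n : ℕ) (f : EuclideanSpace ℝ (Fin n) → ℝ) (x : EuclideanSpace ℝ (Fin n)) :
    EuclideanSpace ℝ (Fin n) :=
  (EuclideanSpace.equiv (Fin n) ℝ).symm fun i => pd n f i x

/-- The coefficient matrix `a_{ij}(q) = δ_{ij} − q_i q_j/(1+|q|²)` of the minimal graph
operator. -/
def amat (n : ℕ) (q : EuclideanSpace ℝ (Fin n)) (i j : Fin n) : ℝ :=
  (if i = j then (1:ℝ) else 0) - q i * q j / (1 + ‖q‖ ^ 2)

/-!
Write `q = ∇f(p)`, `r = ∇w(p)`, `u = ∇h(p) = q - r`, and let `B = -D²f(p)`: a symmetric positive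
semidefinite form with trace `T`, so `B(x, x) ≤ T |x|²`. Since
`∑ a_{ij}(x) ∂_{ij}f(p) = -T + B(x, x) / (1 + |x|²)`, the claim becomes
`(1 + C|r|) B(q, q) / D - B(u, u) / D' ≤ C |r| T` with `D = 1 + |q|²`, `D' = 1 + |u|²`.
For `K = (1 + C|r|) D'` and `N = K - D` one has the identity
`N (K B(q, q) - D B(u, u)) = B(N u + K r, N u + K r) - K D B(r, r)`, and
`|N u + K r|² = (K - D') N D - (N² - |r|² K D)`. For `C = 2.1 + 1.2 (n - 1) ≥ 3.3` and
`|r| ≤ ε₀ = 1/10`, comparing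
`N ≥ |r| D' (C - 1 - |r|)` with `D ≤ D' (1 + |r| + |r|²)` gives `N > 0` and `N² ≥ |r|² K D`,
hence `N (K B(q, q) - D B(u, u)) ≤ T (K - D') N D`, which is the claim after dividing by `N D D'`.
-/

section Euclidean

variable {n : ℕ}

theorem sum_amat_mul_eq (x : EuclideanSpace ℝ (Fin n)) (A : Fin n → Fin n → ℝ) :
    ∑ i, ∑ j, amat n x i j * A i j
      = ∑ i, A i i - (∑ i, ∑ j, x i * x j * A i j) / (1 + ‖x‖ ^ 2) := by
  simp only [amat, sub_mul, ite_mul, one_mul, zero_mul, Finset.sum_sub_distrib,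
    Finset.sum_ite_eq, Finset.mem_univ, if_true, Finset.sum_div]
  congr 1
  refine Finset.sum_congr rfl fun i _ => Finset.sum_congr rfl fun j _ => ?_
  ring

theorem gradAt_sub {f w : EuclideanSpace ℝ (Fin n) → ℝ} {p : EuclideanSpace ℝ (Fin n)}
    (hf : DifferentiableAt ℝ f p) (hw : DifferentiableAt ℝ w p) :
    gradAt n (fun y => f y - w y) p = gradAt n f p - gradAt n w p := by
  ext i
  simp [gradAt, pd, fderiv_fun_sub hf hw]

theorem pd2_eq_fderiv_fderiv {f : EuclideanSpace ℝ (Fin n) → ℝ} {p : EuclideanSpace ℝ (Fin n)}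
    (hf : DifferentiableAt ℝ (fderiv ℝ f) p) (i j : Fin n) :
    pd2 n f i j p = fderiv ℝ (fderiv ℝ f) p (EuclideanSpace.single j 1)
      (EuclideanSpace.single i 1) := by
  have := (hf.hasFDerivAt.clm_apply (hasFDerivAt_const (EuclideanSpace.single i (1 : ℝ)) p))
  change fderiv ℝ (fun y => fderiv ℝ f y (EuclideanSpace.single i 1)) p _ = _
  simp [this.fderiv]

theorem sum_sum_mul_mul_pd2_eq {f : EuclideanSpace ℝ (Fin n) → ℝ} {p : EuclideanSpace ℝ (Fin n)}
    (hf : DifferentiableAt ℝ (fderiv ℝ f) p) (v : EuclideanSpace ℝ (Fin n)) :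
    ∑ i, ∑ j, v i * v j * pd2 n f i j p = fderiv ℝ (fderiv ℝ f) p v v := by
  set b := EuclideanSpace.basisFun (Fin n) ℝ
  conv_rhs => rw [← b.sum_repr v]
  simp [b, pd2_eq_fderiv_fderiv hf, map_sum, Finset.mul_sum, mul_assoc]

end Euclidean

theorem LinearMap.BilinForm.sub_mul_sub_eq_apply_smul_add_smul {R M : Type*} [CommRing R]
    [AddCommGroup M] [Module R M] (B : LinearMap.BilinForm R M) (u r : M) (D K : R) :
    (K - D) * (K * B (u + r) (u + r) - D * B u u)
      = B ((K - D) • u + K • r) ((K - D) • u + K • r) - K * D * B r r := by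
  simp only [map_add, map_smul, LinearMap.add_apply, LinearMap.smul_apply, smul_eq_mul]
  ring

theorem sub_pos_and_sq_mul_mul_le_sq_sub {C s t c D' D K : ℝ} (hC : 33 / 10 ≤ C) (hs : 0 < s)
    (hs' : s ≤ 1 / 10) (hc : c ≤ t * s) (hD' : D' = 1 + t ^ 2) (hD : D = D' + 2 * c + s ^ 2)
    (hK : K = (1 + C * s) * D') :
    0 < K - D ∧ s ^ 2 * K * D ≤ (K - D) ^ 2 := by
  have hD'pos : 0 < D' := by rw [hD']; positivity
  have hlow : s * D' * (C - 1 - s) ≤ K - D := by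
    rw [hK, hD, hD']; nlinarith [sq_nonneg (t - 1)]
  have hDle : D ≤ D' * (1 + s + s ^ 2) := by
    rw [hD, hD']; nlinarith [sq_nonneg (t - 1)]
  have hconst : (1 + C * s) * (1 + s + s ^ 2) ≤ (C - 1 - s) ^ 2 := calc
    _ ≤ (1 + C / 10) * (111 / 100) := by gcongr <;> nlinarith
    _ ≤ (C - 11 / 10) ^ 2 := by nlinarith
    _ ≤ (C - 1 - s) ^ 2 := pow_le_pow_left₀ (by linarith) (by linarith) 2
  have hlow_pos : 0 < s * D' * (C - 1 - s) := by
    have : 0 < C - 1 - s := by linarith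
    positivity
  refine ⟨hlow_pos.trans_le hlow, ?_⟩
  calc s ^ 2 * K * D ≤ s ^ 2 * K * (D' * (1 + s + s ^ 2)) := by
        gcongr; rw [hK]; have := hs.le; positivity
    _ = (s * D') ^ 2 * ((1 + C * s) * (1 + s + s ^ 2)) := by rw [hK]; ring
    _ ≤ (s * D') ^ 2 * (C - 1 - s) ^ 2 := by gcongr
    _ = (s * D' * (C - 1 - s)) ^ 2 := by ring
    _ ≤ (K - D) ^ 2 := by gcongr

section InnerProductSpace

variable {E : Type*} [NormedAddCommGroup E] [InnerProductSpace ℝ E]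

theorem LinearMap.BilinForm.apply_self_le_sum_mul_norm_sq {ι : Type*} [Fintype ι]
    {B : LinearMap.BilinForm ℝ E} (hpos : ∀ x, 0 ≤ B x x) (hB : LinearMap.IsSymm B)
    (b : OrthonormalBasis ι ℝ E) (x : E) :
    B x x ≤ (∑ i, B (b i) (b i)) * ‖x‖ ^ 2 := by
  set T := ∑ i, B (b i) (b i)
  have hexpand : B x x = ∑ i, ⟪b i, x⟫ * B (b i) x := by
    nth_rewrite 1 [← b.sum_repr' x]
    simp only [map_sum, map_smul, LinearMap.sum_apply, LinearMap.smul_apply, smul_eq_mul]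
  have hsq : B x x ^ 2 ≤ ‖x‖ ^ 2 * (T * B x x) := calc
    B x x ^ 2 ≤ (∑ i, ⟪b i, x⟫ ^ 2) * ∑ i, B (b i) x ^ 2 := by
      rw [hexpand]; exact Finset.sum_mul_sq_le_sq_mul_sq _ _ _
    _ ≤ ‖x‖ ^ 2 * ∑ i, B (b i) (b i) * B x x := by
      rw [b.sum_sq_inner_right]
      gcongr with i
      exact B.apply_sq_le_of_symm hpos hB _ _
    _ = ‖x‖ ^ 2 * (T * B x x) := by rw [Finset.sum_mul]
  have hT : 0 ≤ T := Finset.sum_nonneg fun i _ => hpos (b i)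
  rcases (hpos x).eq_or_lt with h | h
  · rw [← h]; positivity
  · exact le_of_mul_le_mul_right (by linarith) h

theorem norm_sub_smul_add_smul_sq (u r : E) (K : ℝ) :
    ‖(K - (1 + ‖u + r‖ ^ 2)) • u + K • r‖ ^ 2 + (K - (1 + ‖u + r‖ ^ 2)) ^ 2
      = (K - (1 + ‖u‖ ^ 2)) * (K - (1 + ‖u + r‖ ^ 2)) * (1 + ‖u + r‖ ^ 2)
        + ‖r‖ ^ 2 * K * (1 + ‖u + r‖ ^ 2) := by
  simp only [norm_add_sq_real, norm_smul, inner_smul_left, inner_smul_right, mul_pow,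
    Real.norm_eq_abs, sq_abs, RCLike.conj_to_real]
  ring

theorem LinearMap.BilinForm.one_add_mul_apply_div_sub_apply_div_le {B : LinearMap.BilinForm ℝ E}
    {T C : ℝ} (hpos : ∀ x, 0 ≤ B x x) (htr : ∀ x, B x x ≤ T * ‖x‖ ^ 2) (hC : 33 / 10 ≤ C)
    (u r : E) (hr : ‖r‖ ≤ 1 / 10) :
    (1 + C * ‖r‖) * (B (u + r) (u + r) / (1 + ‖u + r‖ ^ 2)) - B u u / (1 + ‖u‖ ^ 2)
      ≤ C * ‖r‖ * T := by
  rcases eq_or_ne r 0 with rfl | hr0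
  · simp
  have hs : 0 < ‖r‖ := norm_pos_iff.2 hr0
  set D' := 1 + ‖u‖ ^ 2
  set D := 1 + ‖u + r‖ ^ 2
  set K := (1 + C * ‖r‖) * D'
  set v := (K - D) • u + K • r
  have hD : D = D' + 2 * ⟪u, r⟫ + ‖r‖ ^ 2 := by simp only [D, D', norm_add_sq_real]; ring
  obtain ⟨hN, hsq⟩ :=
    sub_pos_and_sq_mul_mul_le_sq_sub hC hs hr (real_inner_le_norm u r) rfl hD rfl
  have hT : 0 ≤ T := nonneg_of_mul_nonneg_left ((hpos r).trans (htr r)) (by positivity)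
  have hKD : 0 ≤ K * D := by positivity
  have hv : ‖v‖ ^ 2 ≤ (K - D') * (K - D) * D := by
    linarith [norm_sub_smul_add_smul_sq u r K]
  have key : (K - D) * (K * B (u + r) (u + r) - D * B u u)
      ≤ (K - D) * (C * ‖r‖ * T * (D * D')) := calc
    _ = B v v - K * D * B r r := B.sub_mul_sub_eq_apply_smul_add_smul u r D K
    _ ≤ T * ‖v‖ ^ 2 := by nlinarith [htr v, hpos r]
    _ ≤ T * ((K - D') * (K - D) * D) := by gcongr
    _ = (K - D) * (C * ‖r‖ * T * (D * D')) := by ring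
  have hD0 : D ≠ 0 := by positivity
  have hD'0 : D' ≠ 0 := by positivity
  calc (1 + C * ‖r‖) * (B (u + r) (u + r) / D) - B u u / D'
      = (K * B (u + r) (u + r) - D * B u u) / (D * D') := by field_simp; ring
    _ ≤ C * ‖r‖ * T := (div_le_iff₀ (by positivity)).2 (le_of_mul_le_mul_left key hN)

end InnerProductSpace

/-- For every `n ≥ 2` there is `ε₀ > 0` such that: if `f` is twice
differentiable at `p` with negative semidefinite Hessian, `w` is differentiable at `p` with
`|∇w(p)| ≤ ε₀`, and `h = f − w`, then
`Σ a_{ij}(∇h(p)) ∂_{ij}f(p) ≥ (1 + (2.1 + 1.2(n−1))|∇w(p)|) Σ a_{ij}(∇f(p)) ∂_{ij}f(p)`. -/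
theorem stmt8 (n : ℕ) (hn : 2 ≤ n) :
    ∃ ε₀ > (0:ℝ), ∀ (p : EuclideanSpace ℝ (Fin n)) (f w : EuclideanSpace ℝ (Fin n) → ℝ),
      -- `f` is twice differentiable at `p`:
      (∀ᶠ y in 𝓝 p, DifferentiableAt ℝ f y) →
      DifferentiableAt ℝ (fderiv ℝ f) p →
      -- the Hessian of `f` at `p` is negative semidefinite:
      (∀ v : EuclideanSpace ℝ (Fin n), ∑ i, ∑ j, v i * v j * pd2 n f i j p ≤ 0) →
      -- `w` is differentiable at `p` with small gradient:
      DifferentiableAt ℝ w p →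
      ‖gradAt n w p‖ ≤ ε₀ →
      (1 + (2.1 + 1.2 * ((n : ℝ) - 1)) * ‖gradAt n w p‖)
          * ∑ i, ∑ j, amat n (gradAt n f p) i j * pd2 n f i j p
        ≤ ∑ i, ∑ j, amat n (gradAt n (fun y => f y - w y) p) i j * pd2 n f i j p := by
  refine ⟨1 / 10, by norm_num, fun p f w hf hf2 hH hw hsmall => ?_⟩
  set B : LinearMap.BilinForm ℝ _ := -(fderiv ℝ (fderiv ℝ f) p).toBilinForm
  have hquad (v : EuclideanSpace ℝ (Fin n)) : ∑ i, ∑ j, v i * v j * pd2 n f i j p = -B v v := by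
    simp [B, sum_sum_mul_mul_pd2_eq hf2]
  have hpos (v : EuclideanSpace ℝ (Fin n)) : 0 ≤ B v v := by linarith [hH v, hquad v]
  have hsymm : LinearMap.IsSymm B := LinearMap.isSymm_def.2 fun v v' => by
    simp [B, second_derivative_symmetric_of_eventually (hf.mono fun y hy => hy.hasFDerivAt)
      hf2.hasFDerivAt v v']
  set b := EuclideanSpace.basisFun (Fin n) ℝ
  have htrace : ∑ i, B (b i) (b i) = -∑ i, pd2 n f i i p := by
    simp [B, b, pd2_eq_fderiv_fderiv hf2]
  have hC : 33 / 10 ≤ 2.1 + 1.2 * ((n : ℝ) - 1) := by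
    have : (2 : ℝ) ≤ n := by exact_mod_cast hn
    linarith
  have key := B.one_add_mul_apply_div_sub_apply_div_le hpos
    (B.apply_self_le_sum_mul_norm_sq hpos hsymm b) hC (gradAt n f p - gradAt n w p)
    (gradAt n w p) hsmall
  rw [sub_add_cancel, htrace] at key
  rw [gradAt_sub hf.self_of_nhds hw, sum_amat_mul_eq, sum_amat_mul_eq, hquad, hquad]
  linear_combination key
end
end

section
/- There exists a universal constant ε₀ ∈ (0,1) with the following property. Let n ≥ 2 and let F, W ∈ ℝⁿ be vectors with F_i = W_i for all i = 2, …, n (so that F − W = (F₁ − W₁) e₁) and |W| ≤ ε₀. Then 1/(1 + (F₁ − W₁)²) ≤ (1 + 2|W|)/(1 + |F|²). -/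
/-- There is a universal `ε₀ ∈ (0,1)` such that for all `n ≥ 2` and all
vectors `F, W ∈ ℝⁿ` agreeing in all coordinates except possibly the first, with `|W| ≤ ε₀`,
one has `1/(1 + (F₁ − W₁)²) ≤ (1 + 2|W|)/(1 + |F|²)`. -/
theorem stmt9 :
    ∃ ε₀ : ℝ, ε₀ ∈ Set.Ioo (0:ℝ) 1 ∧
      ∀ (n : ℕ) (hn : 2 ≤ n) (F W : EuclideanSpace ℝ (Fin n)),
        (∀ i : Fin n, (i : ℕ) ≠ 0 → F i = W i) → ‖W‖ ≤ ε₀ →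
        1 / (1 + (F ⟨0, by omega⟩ - W ⟨0, by omega⟩) ^ 2)
          ≤ (1 + 2 * ‖W‖) / (1 + ‖F‖ ^ 2) := by
  refine ⟨1/2, ⟨by norm_num, by norm_num⟩, ?_⟩
  intro n hn F W hFW hWle
  set i0 : Fin n := ⟨0, by omega⟩ with hi0
  have hnormF : ‖F‖ ^ 2 = ∑ i, (F i) ^ 2 := by
    rw [EuclideanSpace.norm_eq, Real.sq_sqrt (Finset.sum_nonneg fun i _ => sq_nonneg _)]
    simp [Real.norm_eq_abs, sq_abs]
  have hnormW : ‖W‖ ^ 2 = ∑ i, (W i) ^ 2 := by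
    rw [EuclideanSpace.norm_eq, Real.sq_sqrt (Finset.sum_nonneg fun i _ => sq_nonneg _)]
    simp [Real.norm_eq_abs, sq_abs]
  have hsplitF : ∑ i, (F i) ^ 2 = (F i0) ^ 2 + ∑ i ∈ Finset.univ.erase i0, (F i) ^ 2 :=
    (Finset.add_sum_erase _ (fun i => (F i) ^ 2) (Finset.mem_univ i0)).symm
  have hsplitW : ∑ i, (W i) ^ 2 = (W i0) ^ 2 + ∑ i ∈ Finset.univ.erase i0, (W i) ^ 2 :=
    (Finset.add_sum_erase _ (fun i => (W i) ^ 2) (Finset.mem_univ i0)).symm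
  have hsum_eq : ∑ i ∈ Finset.univ.erase i0, (F i) ^ 2
      = ∑ i ∈ Finset.univ.erase i0, (W i) ^ 2 := by
    refine Finset.sum_congr rfl fun i hi => ?_
    have hi' : i ≠ i0 := Finset.ne_of_mem_erase hi
    have : (i : ℕ) ≠ 0 := fun h => hi' (Fin.ext h)
    rw [hFW i this]
  set s : ℝ := ∑ i ∈ Finset.univ.erase i0, (W i) ^ 2 with hs
  have hs0 : 0 ≤ s := Finset.sum_nonneg fun i _ => sq_nonneg _
  set a : ℝ := F i0
  set b : ℝ := W i0
  set w : ℝ := ‖W‖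
  have hw0 : 0 ≤ w := norm_nonneg _
  have hF2 : ‖F‖ ^ 2 = a ^ 2 + s := by rw [hnormF, hsplitF, hsum_eq]
  have hW2 : w ^ 2 = b ^ 2 + s := by rw [hnormW, hsplitW]
  have hb2 : b ^ 2 ≤ w ^ 2 := by linarith
  have hposL : (0:ℝ) < 1 + (a - b) ^ 2 := by positivity
  have hposR : (0:ℝ) < 1 + ‖F‖ ^ 2 := by positivity
  rw [div_le_div_iff₀ hposL hposR, hF2, one_mul]
  rcases eq_or_lt_of_le hw0 with hw | hw
  · -- w = 0 : then b = 0 and s = 0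
    have hb : b = 0 := by nlinarith [sq_nonneg b]
    have hs' : s = 0 := by nlinarith
    rw [hb, hs', ← hw]
    ring_nf
    nlinarith [sq_nonneg a]
  · -- w > 0
    have hkey : 0 ≤ 2 * w * ((1 + 2 * w) * (1 + (a - b) ^ 2) - (1 + (a ^ 2 + s))) := by
      nlinarith [sq_nonneg (2 * w * (a - b) - b),
        mul_nonneg (mul_nonneg hw0 hw0) (by linarith : (0:ℝ) ≤ 3 - 2 * w), hb2, hW2]
    nlinarith [hkey, hw]
end

section
/- For every integer n ≥ 2 there exists ε₀ > 0, depending only on n, with the following property. Let p ∈ ℝⁿ, let f be twice differentiable at p with negative semidefinite Hessian D²f(p) ≤ 0, and let W ∈ ℝⁿ with |W| ≤ ε₀ be such that ∂_i f(p) = W_i for all i = 2, …, n (i.e. ∇f(p) − W is parallel to e₁). Then Σ_{i,j=1}^n a_{ij}(∇f(p)) ∂_{ij}f(p) ≤ (1 − 1.1(n−1)|W|) · Σ_{i=1}^n a_{ii}(∇f(p)) ∂_{ii}f(p). -/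
open scoped BigOperators RealInnerProductSpace
open Metric Filter Topology

noncomputable section

/-!
Write `q = ∇f(p)`, `H = D²f(p)` and `B i j = a_ij(q) H_ij`. For `i ≠ j` one of the two indices
is not the first, so the corresponding coordinate of `q` is that of `W`; this gives
`a_ij² ≤ |W|² a_ii a_jj`, while negative semidefiniteness gives `(H_ij + H_ji)² ≤ 4 H_ii H_jj`.
By AM–GM, `B i j + B j i = a_ij (H_ij + H_ji) ≤ -|W| (B i i + B j j)`, and summing over the
off-diagonal pairs yields the factor `1 - (n - 1)|W|`. This holds for every `W`, so `ε₀ = 1`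
works.
-/

open Finset

theorem le_add_of_sq_le_four_mul {x A B : ℝ} (hA : 0 ≤ A) (hB : 0 ≤ B)
    (h : x ^ 2 ≤ 4 * (A * B)) : x ≤ A + B :=
  le_of_abs_le <| abs_le_of_sq_le_sq (h.trans <| by nlinarith [four_mul_le_sq_add A B])
    (add_nonneg hA hB)

theorem mul_le_neg_mul_add_of_sq_le {c d α β h₁ h₂ ε : ℝ} (hε : 0 ≤ ε) (hα : 0 ≤ α)
    (hβ : 0 ≤ β) (hh₁ : h₁ ≤ 0) (hh₂ : h₂ ≤ 0) (hc : c ^ 2 ≤ ε ^ 2 * (α * β))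
    (hd : d ^ 2 ≤ 4 * (h₁ * h₂)) : c * d ≤ -ε * (α * h₁ + β * h₂) := by
  have hA : 0 ≤ ε * α * -h₁ := by have := mul_nonneg hε hα; nlinarith
  have hB : 0 ≤ ε * β * -h₂ := by have := mul_nonneg hε hβ; nlinarith
  have key : (c * d) ^ 2 ≤ 4 * ((ε * α * -h₁) * (ε * β * -h₂)) :=
    calc (c * d) ^ 2 = c ^ 2 * d ^ 2 := mul_pow c d 2
      _ ≤ ε ^ 2 * (α * β) * (4 * (h₁ * h₂)) :=
          mul_le_mul hc hd (sq_nonneg d) (by positivity)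
      _ = 4 * ((ε * α * -h₁) * (ε * β * -h₂)) := by ring
  linarith [le_add_of_sq_le_four_mul hA hB key]

section QuadraticForm

variable {ι : Type*} [Fintype ι]

theorem sum_sum_single_add_single_mul [DecidableEq ι] (H : ι → ι → ℝ) (i j : ι) (x y : ℝ) :
    ∑ k, ∑ l, (Pi.single i x + Pi.single j y : ι → ℝ) k
        * (Pi.single i x + Pi.single j y : ι → ℝ) l * H k l
      = x ^ 2 * H i i + x * y * (H i j + H j i) + y ^ 2 * H j j := by
  simp only [Pi.add_apply, add_mul, mul_add, sum_add_distrib, Pi.single_apply, ite_mul,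
    zero_mul, mul_ite, mul_zero, sum_ite_eq', mem_univ, if_true]
  ring

variable {H : ι → ι → ℝ} (hH : ∀ v : ι → ℝ, ∑ i, ∑ j, v i * v j * H i j ≤ 0)
include hH

theorem diag_nonpos_of_quadForm_nonpos (i : ι) : H i i ≤ 0 := by
  classical
  have := hH (Pi.single i 1 + Pi.single i 0)
  rw [sum_sum_single_add_single_mul] at this
  linarith

theorem sq_add_le_four_mul_of_quadForm_nonpos (i j : ι) :
    (H i j + H j i) ^ 2 ≤ 4 * (H i i * H j j) := by
  classical
  have hquad : ∀ x : ℝ, 0 ≤ -H i i * (x * x) + -(H i j + H j i) * x + -H j j := fun x => by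
    have := hH (Pi.single i x + Pi.single j 1)
    rw [sum_sum_single_add_single_mul] at this
    linarith
  have := discrim_le_zero hquad
  rw [discrim] at this
  linarith

end QuadraticForm

theorem sum_sum_le_of_add_le_neg_mul {ι : Type*} [Fintype ι] (B : ι → ι → ℝ) (ε : ℝ)
    (h : ∀ i j, i ≠ j → B i j + B j i ≤ -ε * (B i i + B j j)) :
    ∑ i, ∑ j, B i j ≤ (1 - ε * (Fintype.card ι - 1)) * ∑ i, B i i := by
  classical
  set S := ∑ i, B i i
  have hsymm : 2 * ∑ i, ∑ j, B i j = ∑ i, ∑ j, (B i j + B j i) := by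
    rw [two_mul]
    nth_rewrite 2 [sum_comm]
    simp only [sum_add_distrib]
  have hsplit : ∀ g : ι → ι → ℝ, ∑ i, ∑ j, g i j = ∑ i, g i i + ∑ i, ∑ j ∈ univ.erase i, g i j :=
    fun g => by simp only [← sum_add_distrib, add_sum_erase _ _ (mem_univ _)]
  have hoff : ∑ i, ∑ j ∈ univ.erase i, (B i i + B j j) = 2 * (Fintype.card ι - 1) * S := by
    simp only [sum_erase_eq_sub (mem_univ _), sum_add_distrib, sum_sub_distrib, sum_const,
      card_univ, nsmul_eq_mul, ← mul_sum]
    ring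
  have hle : ∑ i, ∑ j ∈ univ.erase i, (B i j + B j i)
      ≤ ∑ i, ∑ j ∈ univ.erase i, -ε * (B i i + B j j) :=
    sum_le_sum fun i _ => sum_le_sum fun j hj => h i j (ne_of_mem_erase hj).symm
  simp only [← mul_sum] at hle
  rw [hoff] at hle
  have hdiag : ∑ i, (B i i + B i i) = 2 * S := by rw [sum_add_distrib]; ring
  rw [hsplit fun i j => B i j + B j i, hdiag] at hsymm
  linarith

section EuclideanCoordinates

variable {ι : Type*} [Fintype ι] (q : EuclideanSpace ℝ ι)

theorem EuclideanSpace.sq_apply_le_norm_sq (i : ι) : q i ^ 2 ≤ ‖q‖ ^ 2 := by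
  simpa only [Real.norm_eq_abs, sq_abs] using
    pow_le_pow_left₀ (norm_nonneg _) (PiLp.norm_apply_le q i) 2

theorem EuclideanSpace.sq_add_sq_le_norm_sq {i j : ι} (hij : i ≠ j) :
    q i ^ 2 + q j ^ 2 ≤ ‖q‖ ^ 2 := by
  classical
  rw [EuclideanSpace.real_norm_sq_eq, ← sum_pair (f := fun k => q k ^ 2) hij]
  exact sum_le_sum_of_subset_of_nonneg (subset_univ _) fun k _ _ => sq_nonneg (q k)

end EuclideanCoordinates

section Coefficients

variable {n : ℕ} (q : EuclideanSpace ℝ (Fin n))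

theorem amat_comm (i j : Fin n) : amat n q i j = amat n q j i := by
  simp only [amat, eq_comm (a := i), mul_comm (q i)]

theorem amat_self (i : Fin n) : amat n q i i = (1 + ‖q‖ ^ 2 - q i ^ 2) / (1 + ‖q‖ ^ 2) := by
  rw [amat, if_pos rfl, sub_div, div_self (by positivity), ← sq]

theorem amat_of_ne {i j : Fin n} (hij : i ≠ j) :
    amat n q i j = -(q i * q j) / (1 + ‖q‖ ^ 2) := by
  rw [amat, if_neg hij, zero_sub, neg_div]

theorem amat_self_nonneg (i : Fin n) : 0 ≤ amat n q i i := by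
  rw [amat_self]
  have := EuclideanSpace.sq_apply_le_norm_sq q i
  exact div_nonneg (by linarith) (by positivity)

theorem amat_sq_le_of_sq_le {i j : Fin n} (hij : i ≠ j) {ε : ℝ} (hj : q j ^ 2 ≤ ε ^ 2) :
    amat n q i j ^ 2 ≤ ε ^ 2 * (amat n q i i * amat n q j j) := by
  set s := 1 + ‖q‖ ^ 2
  have hi : q i ^ 2 ≤ s - q j ^ 2 := by linarith [EuclideanSpace.sq_add_sq_le_norm_sq q hij]
  have hi' : 1 ≤ s - q i ^ 2 := by linarith [EuclideanSpace.sq_apply_le_norm_sq q i]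
  have key : (q i * q j) ^ 2 ≤ ε ^ 2 * ((s - q i ^ 2) * (s - q j ^ 2)) :=
    calc (q i * q j) ^ 2 = q i ^ 2 * q j ^ 2 := mul_pow _ _ 2
      _ ≤ (s - q j ^ 2) * ε ^ 2 := mul_le_mul hi hj (sq_nonneg _) (by linarith [sq_nonneg (q i)])
      _ ≤ (s - q j ^ 2) * ε ^ 2 * (s - q i ^ 2) :=
          le_mul_of_one_le_right (mul_nonneg (by linarith [sq_nonneg (q i)]) (sq_nonneg ε)) hi'
      _ = ε ^ 2 * ((s - q i ^ 2) * (s - q j ^ 2)) := by ring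
  rw [amat_of_ne q hij, amat_self, amat_self, div_mul_div_comm, mul_div_assoc', div_pow, neg_sq,
    ← sq]
  exact div_le_div_of_nonneg_right key (sq_nonneg s)

end Coefficients

/-- For every `n ≥ 2` there is `ε₀ > 0` such that: if `f` is twice
differentiable at `p` with negative semidefinite Hessian and `W ∈ ℝⁿ` has `|W| ≤ ε₀` and
`∂_i f(p) = W_i` for `i = 2, …, n` (so `∇f(p) − W ∥ e₁`), then
`Σ_{i,j} a_{ij}(∇f(p)) ∂_{ij}f(p) ≤ (1 − 1.1(n−1)|W|) Σ_i a_{ii}(∇f(p)) ∂_{ii}f(p)`. -/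
theorem stmt10 (n : ℕ) (hn : 2 ≤ n) :
    ∃ ε₀ > (0:ℝ), ∀ (p : EuclideanSpace ℝ (Fin n)) (f : EuclideanSpace ℝ (Fin n) → ℝ)
      (W : EuclideanSpace ℝ (Fin n)),
      -- `f` is twice differentiable at `p`:
      (∀ᶠ y in 𝓝 p, DifferentiableAt ℝ f y) →
      DifferentiableAt ℝ (fderiv ℝ f) p →
      -- the Hessian of `f` at `p` is negative semidefinite:
      (∀ v : EuclideanSpace ℝ (Fin n), ∑ i, ∑ j, v i * v j * pd2 n f i j p ≤ 0) →
      ‖W‖ ≤ ε₀ →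
      (∀ i : Fin n, (i : ℕ) ≠ 0 → pd n f i p = W i) →
      ∑ i, ∑ j, amat n (gradAt n f p) i j * pd2 n f i j p
        ≤ (1 - 1.1 * ((n : ℝ) - 1) * ‖W‖)
            * ∑ i, amat n (gradAt n f p) i i * pd2 n f i i p := by
  refine ⟨1, one_pos, fun p f W _ _ hH _ hW => ?_⟩
  set q := gradAt n f p
  set H := fun i j => pd2 n f i j p
  have hHv : ∀ v : Fin n → ℝ, ∑ i, ∑ j, v i * v j * H i j ≤ 0 := fun v => hH (WithLp.toLp 2 v)
  have hq : ∀ k : Fin n, (k : ℕ) ≠ 0 → q k ^ 2 ≤ ‖W‖ ^ 2 := fun k hk => by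
    rw [show q k = W k from hW k hk]
    exact EuclideanSpace.sq_apply_le_norm_sq W k
  have hsmall : ∀ i j, i ≠ j → amat n q i j ^ 2 ≤ ‖W‖ ^ 2 * (amat n q i i * amat n q j j) := by
    intro i j hij
    by_cases hj : (j : ℕ) = 0
    · have hi : (i : ℕ) ≠ 0 := fun hi => hij (Fin.ext (hi.trans hj.symm))
      rw [amat_comm, mul_comm (amat n q i i)]
      exact amat_sq_le_of_sq_le q hij.symm (hq i hi)
    · exact amat_sq_le_of_sq_le q hij (hq j hj)
  have hoff : ∀ i j, i ≠ j → amat n q i j * H i j + amat n q j i * H j i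
      ≤ -‖W‖ * (amat n q i i * H i i + amat n q j j * H j j) := fun i j hij => by
    rw [amat_comm q j i, ← mul_add]
    exact mul_le_neg_mul_add_of_sq_le (norm_nonneg W) (amat_self_nonneg q i)
      (amat_self_nonneg q j) (diag_nonpos_of_quadForm_nonpos hHv i)
      (diag_nonpos_of_quadForm_nonpos hHv j) (hsmall i j hij)
      (sq_add_le_four_mul_of_quadForm_nonpos hHv i j)
  have hdiag : ∑ i, amat n q i i * H i i ≤ 0 := sum_nonpos fun i _ =>
    mul_nonpos_of_nonneg_of_nonpos (amat_self_nonneg q i) (diag_nonpos_of_quadForm_nonpos hHv i)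
  have hgain : 0 ≤ ((n : ℝ) - 1) * ‖W‖ :=
    mul_nonneg (by linarith [show (2 : ℝ) ≤ n by exact_mod_cast hn]) (norm_nonneg W)
  have hsum := sum_sum_le_of_add_le_neg_mul (fun i j => amat n q i j * H i j) ‖W‖ hoff
  rw [Fintype.card_fin] at hsum
  linarith [mul_nonpos_of_nonneg_of_nonpos hgain hdiag]
end
end
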